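/- arXiv:1306.2932 — 6 statements merged into one kernel-verified Lean document; each statement's English description precedes it below -/
import Mathlib

section
/- Let G be a graph with a complete α-labeling f with critical number k on n = m+1 vertices. Then f*(v) := (k − f(v)) mod n is again a complete α-labeling of G. -/
def GracefulLabeling {V : Type*} (G : SimpleGraph V) (m : ℕ) (f : V → ℕ) : Prop :=
  Function.Injective f ∧ (∀ v, f v ≤ m) ∧
    ∀ ⦃u v x y : V⦄, G.Adj u v → G.Adj x y →
      ((f u : ℤ) - f v).natAbs = ((f x : ℤ) - f y).natAbs → s(u, v) = s(x, y)

def AlphaLabeling {V : Type*} (G : SimpleGraph V) (m : ℕ) (f : V → ℕ) (k : ℕ) : Prop :=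
  GracefulLabeling G m f ∧ k ≤ m ∧
    ∀ ⦃u v : V⦄, G.Adj u v → min (f u) (f v) ≤ k ∧ k < max (f u) (f v)

def CompleteAlphaLabeling {V : Type*} (G : SimpleGraph V) (m : ℕ) (f : V → ℕ) (k : ℕ) : Prop :=
  AlphaLabeling G m f k ∧ ∀ l ≤ m, ∃ v, f v = l

def SimpleGraph.disjUnion' {ι : Type*} {V : ι → Type*} (G : ∀ i, SimpleGraph (V i)) :
    SimpleGraph (Σ i, V i) where
  Adj := fun a b => ∃ h : a.1 = b.1, (G b.1).Adj (h ▸ a.2) b.2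
  symm := by
    constructor
    rintro ⟨i, x⟩ ⟨j, y⟩ ⟨h, hadj⟩
    dsimp only at h
    subst h
    exact ⟨rfl, hadj.symm⟩
  loopless := by
    constructor
    rintro ⟨i, x⟩ ⟨h, hadj⟩
    exact (G i).loopless.irrefl _ hadj

/-!
The map `a ↦ (k - a) mod n` is an involution of `{0, …, n - 1}`, so the new labelling is again a
bijection onto `{0, …, m}`. On an edge with `f u ≤ k < f v` it sends `f u` to `k - f u ≤ k` and
`f v` to `k + n - f v > k`, so `k` is still a critical number and every edge label `d` becomes
`n - d`; distinct edge labels therefore stay distinct.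
-/

def reflectMod (n k a : ℕ) : ℕ := (((k : ℤ) - a) % n).toNat

section reflectMod

variable {n k a b : ℕ}

theorem reflectMod_lt (hn : 0 < n) : reflectMod n k a < n := by
  have hlt := Int.emod_lt_of_pos ((k : ℤ) - a) (Int.natCast_pos.mpr hn)
  unfold reflectMod
  omega

theorem reflectMod_reflectMod (hn : 0 < n) (ha : a < n) :
    reflectMod n k (reflectMod n k a) = a := by
  unfold reflectMod
  rw [Int.toNat_of_nonneg (Int.emod_nonneg _ (by omega)), Int.sub_emod, Int.emod_emod,
    ← Int.sub_emod, sub_sub_cancel, Int.emod_eq_of_lt (by omega) (by omega)]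
  rfl

theorem reflectMod_of_le (hak : a ≤ k) (hk : k < n) : reflectMod n k a = k - a := by
  unfold reflectMod
  rw [Int.emod_eq_of_lt (by omega) (by omega)]
  omega

theorem reflectMod_of_lt (hka : k < a) (ha : a < n) : reflectMod n k a = k + n - a := by
  unfold reflectMod
  rw [Int.emod_eq_add_self_emod, Int.emod_eq_of_lt (by omega) (by omega)]
  omega

theorem reflectMod_crossing (ha : a < n) (hb : b < n) (h : min a b ≤ k ∧ k < max a b) :
    min (reflectMod n k a) (reflectMod n k b) ≤ k ∧
      k < max (reflectMod n k a) (reflectMod n k b) := by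
  rcases le_or_gt a k with hak | hka
  · rw [reflectMod_of_le hak (by omega), reflectMod_of_lt (by omega) hb]
    omega
  · rw [reflectMod_of_lt hka ha, reflectMod_of_le (by omega) (by omega)]
    omega

theorem natAbs_sub_reflectMod_add_natAbs_sub (ha : a < n) (hb : b < n)
    (h : min a b ≤ k ∧ k < max a b) :
    ((reflectMod n k a : ℤ) - reflectMod n k b).natAbs + ((a : ℤ) - b).natAbs = n := by
  rcases le_or_gt a k with hak | hka
  · rw [reflectMod_of_le hak (by omega), reflectMod_of_lt (by omega) hb]
    omega
  · rw [reflectMod_of_lt hka ha, reflectMod_of_le (by omega) (by omega)]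
    omega

end reflectMod

section Labeling

variable {V : Type*} {G : SimpleGraph V} {m k : ℕ} {f : V → ℕ}

theorem AlphaLabeling.reflect (hf : AlphaLabeling G m f k) :
    AlphaLabeling G m (fun v => reflectMod (m + 1) k (f v)) k := by
  obtain ⟨⟨hinj, hle, hedge⟩, hkm, hcrit⟩ := hf
  have hlt : ∀ v, f v < m + 1 := fun v => Nat.lt_succ_of_le (hle v)
  have hlabel : ∀ ⦃u v⦄, G.Adj u v →
      ((reflectMod (m + 1) k (f u) : ℤ) - reflectMod (m + 1) k (f v)).natAbs
        + ((f u : ℤ) - f v).natAbs = m + 1 := fun u v huv =>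
    natAbs_sub_reflectMod_add_natAbs_sub (hlt u) (hlt v) (hcrit huv)
  refine ⟨⟨fun u v huv => hinj ?_, fun v => ?_, fun u v x y huv hxy hd => ?_⟩, hkm,
    fun u v huv => reflectMod_crossing (hlt u) (hlt v) (hcrit huv)⟩
  · simpa only [reflectMod_reflectMod m.succ_pos (hlt _)] using
      congrArg (reflectMod (m + 1) k) huv
  · exact Nat.le_of_lt_succ (reflectMod_lt m.succ_pos)
  · dsimp only at hd
    have h₁ := hlabel huv
    have h₂ := hlabel hxy
    exact hedge huv hxy (by omega)

theorem CompleteAlphaLabeling.reflect (hf : CompleteAlphaLabeling G m f k) :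
    CompleteAlphaLabeling G m (fun v => reflectMod (m + 1) k (f v)) k := by
  refine ⟨hf.1.reflect, fun l hl => ?_⟩
  obtain ⟨v, hv⟩ := hf.2 (reflectMod (m + 1) k l) (Nat.le_of_lt_succ (reflectMod_lt m.succ_pos))
  exact ⟨v, by dsimp only; rw [hv, reflectMod_reflectMod m.succ_pos (Nat.lt_succ_of_le hl)]⟩

end Labeling

theorem stmt3 {V : Type*} (G : SimpleGraph V) (n m k : ℕ) (hn : n = m + 1)
    (f : V → ℕ) (hf : CompleteAlphaLabeling G m f k) :
    ∃ k' : ℕ, CompleteAlphaLabeling G m (fun v => (((k : ℤ) - (f v : ℤ)) % (n : ℤ)).toNat) k' := by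
  subst hn
  exact ⟨k, hf.reflect⟩
end

section
/- Any double of a graceful tree with m edges has a complete α-labeling with critical number m. -/
def double {V : Type*} (G : SimpleGraph V) (w : V) : SimpleGraph (V ⊕ V) :=
  SimpleGraph.fromRel (fun a b =>
    (∃ x y, a = Sum.inl x ∧ b = Sum.inl y ∧ G.Adj x y) ∨
    (∃ x y, a = Sum.inr x ∧ b = Sum.inr y ∧ G.Adj x y) ∨
    (a = Sum.inl w ∧ b = Sum.inr w))

open SimpleGraph

section DoubleLabeling

variable {V : Type*} {G : SimpleGraph V} {m : ℕ} {f : V → ℕ} {w : V}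

namespace GracefulLabeling

lemma sub_ne_zero (hf : GracefulLabeling G m f) {p q : V} (h : G.Adj p q) :
    (f q : ℤ) - f p ≠ 0 := by
  intro h0
  exact h.ne (hf.1 (by omega))

lemma eq_of_sub_eq (hf : GracefulLabeling G m f) {p q p' q' : V} (h : G.Adj p q)
    (h' : G.Adj p' q') (hd : (f q : ℤ) - f p = f q' - f p') : p = p' ∧ q = q' := by
  rcases Sym2.eq_iff.mp (hf.2.2 h h' (by omega)) with hpq | ⟨rfl, rfl⟩
  · exact hpq
  · exact absurd (by omega) (hf.sub_ne_zero h)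

end GracefulLabeling

def doubleBase : V ⊕ V → V := Sum.elim id id

def doubleColor (c : V → Bool) : V ⊕ V → Bool := Sum.elim c fun v => !c v

lemma doubleBase_doubleColor_bijective (c : V → Bool) :
    Function.Bijective fun a => (doubleBase a, doubleColor c a) := by
  refine ⟨?_, fun ⟨v, b⟩ => ?_⟩
  · rintro (x | x) (y | y) h <;> cases hx : c x <;> simp_all [doubleBase, doubleColor]
  · by_cases hb : c v = b
    · exact ⟨Sum.inl v, by simp [doubleBase, doubleColor, hb]⟩
    · exact ⟨Sum.inr v, by cases b <;> simp_all [doubleBase, doubleColor]⟩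

lemma double_adj_doubleBase {a b : V ⊕ V} (h : (double G w).Adj a b) :
    G.Adj (doubleBase a) (doubleBase b) ∨ doubleBase a = w ∧ doubleBase b = w := by
  rw [double, fromRel_adj] at h
  obtain ⟨-, (⟨x, y, rfl, rfl, h⟩ | ⟨x, y, rfl, rfl, h⟩ | ⟨rfl, rfl⟩) |
    (⟨x, y, rfl, rfl, h⟩ | ⟨x, y, rfl, rfl, h⟩ | ⟨rfl, rfl⟩)⟩ := h <;>
    simp_all [doubleBase, adj_comm]

lemma doubleColor_eq_not_of_adj (c : G.Coloring Bool) {a b : V ⊕ V} (h : (double G w).Adj a b) :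
    doubleColor c b = !doubleColor c a := by
  rw [double, fromRel_adj] at h
  obtain ⟨-, (⟨x, y, rfl, rfl, h⟩ | ⟨x, y, rfl, rfl, h⟩ | ⟨rfl, rfl⟩) |
    (⟨x, y, rfl, rfl, h⟩ | ⟨x, y, rfl, rfl, h⟩ | ⟨rfl, rfl⟩)⟩ := h <;>
    simp only [doubleColor, Sum.elim_inl, Sum.elim_inr, Bool.not_not] <;>
    grind [c.valid h]

def doubleLabeling (c : V → Bool) (m : ℕ) (f : V → ℕ) (a : V ⊕ V) : ℕ :=
  f (doubleBase a) + if doubleColor c a then m + 1 else 0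

section Labeling

variable (c : V → Bool)

lemma doubleLabeling_le_iff (hfm : ∀ v, f v ≤ m) (a : V ⊕ V) :
    doubleLabeling c m f a ≤ m ↔ doubleColor c a = false := by
  have := hfm (doubleBase a)
  unfold doubleLabeling
  cases doubleColor c a <;> simp <;> omega

lemma doubleLabeling_le (hfm : ∀ v, f v ≤ m) (a : V ⊕ V) : doubleLabeling c m f a ≤ 2 * m + 1 := by
  have := hfm (doubleBase a)
  unfold doubleLabeling
  split_ifs <;> omega

lemma doubleLabeling_injective (hf : Function.Injective f) (hfm : ∀ v, f v ≤ m) :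
    Function.Injective (doubleLabeling c m f) := by
  intro a b hab
  have hcol : doubleColor c a = doubleColor c b := by
    rw [Bool.eq_iff_iff, ← Bool.not_eq_false, ← Bool.not_eq_false (doubleColor c b),
      ← doubleLabeling_le_iff c hfm, ← doubleLabeling_le_iff c hfm, hab]
  have hbase : f (doubleBase a) = f (doubleBase b) := by
    simpa [doubleLabeling, hcol] using hab
  exact (doubleBase_doubleColor_bijective c).1 (Prod.ext (hf hbase) hcol)

lemma natAbs_doubleLabeling_sub (hfm : ∀ v, f v ≤ m) {u v : V ⊕ V}
    (hu : doubleColor c u = false) (hv : doubleColor c v = true) :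
    (((doubleLabeling c m f u : ℤ) - doubleLabeling c m f v).natAbs : ℤ) =
      m + 1 + ((f (doubleBase v) : ℤ) - f (doubleBase u)) := by
  have := hfm (doubleBase u)
  simp only [doubleLabeling, hu, hv, Bool.false_eq_true, ↓reduceIte]
  omega

lemma exists_doubleLabeling_eq (hsurj : ∀ l ≤ m, ∃ v, f v = l) {l : ℕ} (hl : l ≤ 2 * m + 1) :
    ∃ a, doubleLabeling c m f a = l := by
  have lift (v : V) (b : Bool) : ∃ a, doubleBase a = v ∧ doubleColor c a = b := by
    simpa using (doubleBase_doubleColor_bijective c).2 (v, b)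
  by_cases hlm : l ≤ m
  · obtain ⟨v, rfl⟩ := hsurj l hlm
    obtain ⟨a, rfl, ha⟩ := lift v false
    exact ⟨a, by simp [doubleLabeling, ha]⟩
  · obtain ⟨v, hv⟩ := hsurj (l - (m + 1)) (by omega)
    obtain ⟨a, rfl, ha⟩ := lift v true
    exact ⟨a, by simp [doubleLabeling, ha, hv]; omega⟩

end Labeling

section Double

variable (c : G.Coloring Bool)

lemma double_eq_of_sub_eq (hf : GracefulLabeling G m f) {u v x y : V ⊕ V}
    (huv : (double G w).Adj u v) (hxy : (double G w).Adj x y)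
    (hu : doubleColor c u = false) (hx : doubleColor c x = false)
    (hd : (f (doubleBase v) : ℤ) - f (doubleBase u) = f (doubleBase y) - f (doubleBase x)) :
    u = x ∧ v = y := by
  suffices hbase : doubleBase u = doubleBase x ∧ doubleBase v = doubleBase y by
    have hv := doubleColor_eq_not_of_adj c huv
    have hy := doubleColor_eq_not_of_adj c hxy
    have inj := (doubleBase_doubleColor_bijective c).1
    exact ⟨inj (Prod.ext hbase.1 (hu.trans hx.symm)),
      inj (Prod.ext hbase.2 (by simp only [hv, hy, hu, hx]))⟩
  rcases double_adj_doubleBase huv with h₁ | ⟨hu', hv'⟩ <;>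
    rcases double_adj_doubleBase hxy with h₂ | ⟨hx', hy'⟩
  · exact hf.eq_of_sub_eq h₁ h₂ hd
  · exact absurd (by rw [hd, hx', hy', sub_self]) (hf.sub_ne_zero h₁)
  · exact absurd (by rw [← hd, hu', hv', sub_self]) (hf.sub_ne_zero h₂)
  · exact ⟨hu'.trans hx'.symm, hv'.trans hy'.symm⟩

lemma gracefulLabeling_double (hf : GracefulLabeling G m f) :
    GracefulLabeling (double G w) (2 * m + 1) (doubleLabeling c m f) := by
  refine ⟨doubleLabeling_injective c hf.1 hf.2.1, doubleLabeling_le c hf.2.1, ?_⟩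
  intro u v x y huv hxy heq
  wlog hu : doubleColor c u = false generalizing u v
  · rw [Sym2.eq_swap]
    exact this huv.symm (by omega) (by simpa [hu] using doubleColor_eq_not_of_adj c huv)
  wlog hx : doubleColor c x = false generalizing x y
  · rw [Sym2.eq_swap (a := x)]
    exact this hxy.symm (by omega) (by simpa [hx] using doubleColor_eq_not_of_adj c hxy)
  have hv : doubleColor c v = true := by simpa [hu] using doubleColor_eq_not_of_adj c huv
  have hy : doubleColor c y = true := by simpa [hx] using doubleColor_eq_not_of_adj c hxy
  have h₁ := natAbs_doubleLabeling_sub c hf.2.1 hu hv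
  have h₂ := natAbs_doubleLabeling_sub c hf.2.1 hx hy
  obtain ⟨rfl, rfl⟩ := double_eq_of_sub_eq c hf huv hxy hu hx (by omega)
  rfl

lemma doubleLabeling_min_le_lt_max (hfm : ∀ v, f v ≤ m) {u v : V ⊕ V}
    (h : (double G w).Adj u v) :
    min (doubleLabeling c m f u) (doubleLabeling c m f v) ≤ m ∧
      m < max (doubleLabeling c m f u) (doubleLabeling c m f v) := by
  have hu := doubleLabeling_le_iff c hfm u
  have hv := doubleLabeling_le_iff c hfm v
  rw [doubleColor_eq_not_of_adj c h] at hv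
  cases hcol : doubleColor c u <;>
    simp only [hcol, Bool.not_false, Bool.not_true, Bool.true_eq_false, iff_true, iff_false,
      not_le] at hu hv <;> omega

theorem completeAlphaLabeling_double (hf : GracefulLabeling G m f)
    (hsurj : ∀ l ≤ m, ∃ v, f v = l) :
    CompleteAlphaLabeling (double G w) (2 * m + 1) (doubleLabeling c m f) m :=
  ⟨⟨gracefulLabeling_double c hf, by omega, fun _ _ h => doubleLabeling_min_le_lt_max c hf.2.1 h⟩,
    fun _ hl => exists_doubleLabeling_eq c hsurj hl⟩

end Double

end DoubleLabeling

theorem stmt5_general {V : Type*} (T : SimpleGraph V) (m : ℕ) (hT : T.IsTree)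
    (f : V → ℕ) (hf : GracefulLabeling T m f) (hsurj : ∀ l ≤ m, ∃ v, f v = l) (w : V) :
    ∃ g : V ⊕ V → ℕ, CompleteAlphaLabeling (double T w) (2 * m + 1) g m := by
  have c : T.Coloring Bool := hT.isBipartite.toColoring (by simp)
  exact ⟨_, completeAlphaLabeling_double c hf hsurj⟩

theorem stmt5 {V : Type*} [Fintype V] (T : SimpleGraph V) [DecidableRel T.Adj]
    (m j : ℕ) (hT : T.IsTree) (hm : T.edgeFinset.card = m)
    (f : V → ℕ) (hf : GracefulLabeling T m f) (hsurj : ∀ l ≤ m, ∃ v, f v = l)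
    (w : V) (hw : f w = j) :
    ∃ g : V ⊕ V → ℕ, CompleteAlphaLabeling (double T w) (2 * m + 1) g m :=
  stmt5_general T m hT f hf hsurj w
end

section
/- Suppose x₁,...,x_r and y₁,...,y_r are positive integers satisfying: for odd i, x_i = y_{r−(i−1)/2} and y_i = x_{r−(i−1)/2}; for even i, x_i = x_{i/2} and y_i = y_{i/2} (for all 1 ≤ i ≤ r). Then for every odd i with 1 ≤ i ≤ r, the sum of x_t for t from (i+1)/2 to i equals the sum of y_t for t from r−(i−1)/2 to r. -/
open Finset

section IntervalSums

variable {M : Type*} [AddCommMonoid M] (f : ℕ → M)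

lemma add_sum_Icc_window_succ (j : ℕ) :
    f (j + 1) + ∑ t ∈ Icc (j + 1 + 1) (2 * j + 3), f t =
      ∑ t ∈ Icc (j + 1) (2 * j + 1), f t + f (2 * j + 2) + f (2 * j + 3) := by
  rw [Icc_add_one_left_eq_Ioc, add_sum_Ioc_eq_sum_Icc (by omega),
    show 2 * j + 3 = 2 * j + 1 + 1 + 1 by ring, sum_Icc_succ_top (by omega),
    sum_Icc_succ_top (by omega)]

lemma sum_Icc_sub_succ_eq_add {j r : ℕ} (h : j < r) :
    ∑ t ∈ Icc (r - (j + 1)) r, f t = f (r - (j + 1)) + ∑ t ∈ Icc (r - j) r, f t := by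
  rw [show r - j = r - (j + 1) + 1 by omega, Icc_add_one_left_eq_Ioc,
    add_sum_Ioc_eq_sum_Icc (by omega)]

end IntervalSums

/-- The window `[j + 1, 2j + 1]` moves to `[j + 2, 2j + 3]` by dropping `x (j + 1)` and adding
`x (2j + 2) = x (j + 1)` and `x (2j + 3) = y (r - (j + 1))`, which is exactly the term gained
on the right. -/
theorem sum_Icc_half_eq_sum_Icc_tail {M : Type*} [AddCancelCommMonoid M] {r : ℕ} {x y : ℕ → M}
    (hodd : ∀ j, 2 * j + 1 ≤ r → x (2 * j + 1) = y (r - j))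
    (heven : ∀ j, 2 * j + 2 ≤ r → x (2 * j + 2) = x (j + 1)) :
    ∀ j, 2 * j + 1 ≤ r → ∑ t ∈ Icc (j + 1) (2 * j + 1), x t = ∑ t ∈ Icc (r - j) r, y t := by
  intro j
  induction j with
  | zero => simpa using hodd 0
  | succ j ih =>
    intro h
    apply add_left_cancel (a := x (j + 1))
    calc x (j + 1) + ∑ t ∈ Icc (j + 1 + 1) (2 * (j + 1) + 1), x t
        = ∑ t ∈ Icc (j + 1) (2 * j + 1), x t + x (2 * j + 2) + x (2 * j + 3) :=
          add_sum_Icc_window_succ x j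
      _ = ∑ t ∈ Icc (r - j) r, y t + x (j + 1) + y (r - (j + 1)) := by
          rw [ih (by omega), heven j (by omega), show 2 * j + 3 = 2 * (j + 1) + 1 by ring,
            hodd (j + 1) h]
      _ = x (j + 1) + ∑ t ∈ Icc (r - (j + 1)) r, y t := by
          rw [sum_Icc_sub_succ_eq_add y (by omega)]
          abel

theorem stmt13_general (r : ℕ) (x y : ℕ → ℕ)
    (hodd : ∀ i, 1 ≤ i → i ≤ r → Odd i →
      x i = y (r - (i - 1) / 2) ∧ y i = x (r - (i - 1) / 2))
    (heven : ∀ i, 1 ≤ i → i ≤ r → Even i → x i = x (i / 2) ∧ y i = y (i / 2)) :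
    ∀ i, 1 ≤ i → i ≤ r → Odd i →
      ∑ t ∈ Finset.Icc ((i + 1) / 2) i, x t = ∑ t ∈ Finset.Icc (r - (i - 1) / 2) r, y t := by
  have hodd' : ∀ j, 2 * j + 1 ≤ r → x (2 * j + 1) = y (r - j) := fun j hj => by
    simpa using (hodd (2 * j + 1) (by omega) hj (odd_two_mul_add_one j)).1
  have heven' : ∀ j, 2 * j + 2 ≤ r → x (2 * j + 2) = x (j + 1) := fun j hj => by
    simpa [show (2 * j + 2) / 2 = j + 1 by omega] using
      (heven (2 * j + 2) (by omega) hj ⟨j + 1, by ring⟩).1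
  rintro i - hir ⟨j, rfl⟩
  rw [show (2 * j + 1 + 1) / 2 = j + 1 by omega, show (2 * j + 1 - 1) / 2 = j by omega]
  exact sum_Icc_half_eq_sum_Icc_tail hodd' heven' j hir

theorem stmt13 (r : ℕ) (x y : ℕ → ℕ)
    (hx : ∀ i, 1 ≤ i → i ≤ r → 0 < x i) (hy : ∀ i, 1 ≤ i → i ≤ r → 0 < y i)
    (hodd : ∀ i, 1 ≤ i → i ≤ r → Odd i →
      x i = y (r - (i - 1) / 2) ∧ y i = x (r - (i - 1) / 2))
    (heven : ∀ i, 1 ≤ i → i ≤ r → Even i → x i = x (i / 2) ∧ y i = y (i / 2)) :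
    ∀ i, 1 ≤ i → i ≤ r → Odd i →
      ∑ t ∈ Finset.Icc ((i + 1) / 2) i, x t = ∑ t ∈ Finset.Icc (r - (i - 1) / 2) r, y t :=
  stmt13_general r x y hodd heven
end

section
/- Suppose x₁,...,x_r and y₁,...,y_r are positive integers satisfying: for odd i, x_i = y_{r−(i−1)/2} and y_i = x_{r−(i−1)/2}; for even i, x_i = x_{i/2} and y_i = y_{i/2} (for all 1 ≤ i ≤ r). Then for every even j with 2 ≤ j ≤ r, the sum of x_t for t from j/2 + 1 to j equals the sum of y_t for t from r − j/2 + 1 to r. -/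
/-!
Write `j = 2m`. Passing from `2m` to `2m + 2` adds `x (2m+1) + x (2m+2)` to the left-hand sum and
drops `x (m+1)` from it. Since `x (2m+2) = x (m+1)`, the net change is `x (2m+1) = y (r-m)`, which is
exactly the new term of the right-hand sum, so the identity follows by induction on `m`.
-/

open Finset

theorem sum_Ioc_two_mul_eq_sum_Ioc_sub {M : Type*} [AddCancelCommMonoid M] (r : ℕ) (x y : ℕ → M)
    (hodd : ∀ m, 2 * m + 2 ≤ r → x (2 * m + 1) = y (r - m))
    (heven : ∀ m, 2 * m + 2 ≤ r → x (2 * m + 2) = x (m + 1)) (m : ℕ) (hm : 2 * m ≤ r) :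
    ∑ t ∈ Ioc m (2 * m), x t = ∑ t ∈ Ioc (r - m) r, y t := by
  induction m with
  | zero => simp
  | succ m ih =>
    have hx : x (m + 1) + ∑ t ∈ Ioc (m + 1) (2 * (m + 1)), x t
        = x (m + 1) + (∑ t ∈ Ioc m (2 * m), x t + x (2 * m + 1)) := by
      rw [add_sum_Ioc_eq_sum_Icc (by omega), Icc_add_one_left_eq_Ioc, mul_add,
        sum_Ioc_succ_top (by omega), sum_Ioc_succ_top (by omega), heven m (by omega), add_comm]
    have hy : ∑ t ∈ Ioc (r - (m + 1)) r, y t = y (r - m) + ∑ t ∈ Ioc (r - m) r, y t := by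
      rw [add_sum_Ioc_eq_sum_Icc (by omega), ← Icc_add_one_left_eq_Ioc,
        show r - (m + 1) + 1 = r - m by omega]
    rw [ih (by omega), hodd m (by omega), add_comm _ (y _), ← hy] at hx
    exact add_left_cancel hx

theorem stmt14_general (r : ℕ) (x y : ℕ → ℕ)
    (hodd : ∀ i, 1 ≤ i → i ≤ r → Odd i →
      x i = y (r - (i - 1) / 2) ∧ y i = x (r - (i - 1) / 2))
    (heven : ∀ i, 1 ≤ i → i ≤ r → Even i → x i = x (i / 2) ∧ y i = y (i / 2)) :
    ∀ j, 2 ≤ j → j ≤ r → Even j →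
      ∑ t ∈ Finset.Icc (j / 2 + 1) j, x t = ∑ t ∈ Finset.Icc (r - j / 2 + 1) r, y t := by
  rintro j - hjr ⟨m, rfl⟩
  have key := sum_Ioc_two_mul_eq_sum_Ioc_sub r x y
    (fun k hk => by simpa using (hodd (2 * k + 1) (by omega) (by omega) (odd_two_mul_add_one k)).1)
    (fun k hk => by
      simpa [show (2 * k + 2) / 2 = k + 1 by omega] using
        (heven (2 * k + 2) (by omega) hk ⟨k + 1, by omega⟩).1)
    m (by omega)
  rwa [show (m + m) / 2 = m by omega, Icc_add_one_left_eq_Ioc, Icc_add_one_left_eq_Ioc, ← two_mul]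

theorem stmt14 (r : ℕ) (x y : ℕ → ℕ)
    (hx : ∀ i, 1 ≤ i → i ≤ r → 0 < x i) (hy : ∀ i, 1 ≤ i → i ≤ r → 0 < y i)
    (hodd : ∀ i, 1 ≤ i → i ≤ r → Odd i →
      x i = y (r - (i - 1) / 2) ∧ y i = x (r - (i - 1) / 2))
    (heven : ∀ i, 1 ≤ i → i ≤ r → Even i → x i = x (i / 2) ∧ y i = y (i / 2)) :
    ∀ j, 2 ≤ j → j ≤ r → Even j →
      ∑ t ∈ Finset.Icc (j / 2 + 1) j, x t = ∑ t ∈ Finset.Icc (r - j / 2 + 1) r, y t :=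
  stmt14_general r x y hodd heven
end

section
/- For each odd natural number j with 1 ≤ j ≤ i (i odd), there exists a unique natural number r ≥ 0 such that j·2^r lies in the interval [(i+1)/2, i]. -/
/-! For odd `i` the window `[(i + 1) / 2, i]` is `(i / 2, i]`, so `j * 2 ^ n` lies in it exactly when
`j * 2 ^ n ≤ i < j * 2 ^ (n + 1)`, i.e. `2 ^ n ≤ i / j < 2 ^ (n + 1)`; this forces `n = Nat.log 2 (i / j)`. -/

theorem Nat.mul_two_pow_le_and_lt_iff_eq_log {i j n : ℕ} (hj : 0 < j) (hji : j ≤ i) :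
    j * 2 ^ n ≤ i ∧ i < j * 2 ^ (n + 1) ↔ n = Nat.log 2 (i / j) := by
  have hdiv : i / j ≠ 0 := (Nat.div_pos hji hj).ne'
  rw [eq_comm, Nat.log_eq_iff (Or.inr ⟨one_lt_two, hdiv⟩), Nat.le_div_iff_mul_le hj,
    Nat.div_lt_iff_lt_mul hj, mul_comm (2 ^ n), mul_comm (2 ^ (n + 1))]

theorem Odd.add_one_div_two_le_iff {i : ℕ} (hi : Odd i) (x : ℕ) : (i + 1) / 2 ≤ x ↔ i < 2 * x := by
  obtain ⟨k, rfl⟩ := hi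
  omega

theorem stmt16_general (i : ℕ) (hi : Odd i) (j : ℕ) (hj1 : 1 ≤ j) (hji : j ≤ i) :
    ∃! n : ℕ, (i + 1) / 2 ≤ j * 2 ^ n ∧ j * 2 ^ n ≤ i := by
  have hcond (n : ℕ) : (i + 1) / 2 ≤ j * 2 ^ n ∧ j * 2 ^ n ≤ i ↔ n = Nat.log 2 (i / j) := by
    rw [hi.add_one_div_two_le_iff, and_comm, ← Nat.mul_two_pow_le_and_lt_iff_eq_log hj1 hji]
    ring_nf
  simp_rw [hcond]
  exact existsUnique_eq

theorem stmt16 (i : ℕ) (hi : Odd i) (j : ℕ) (hj : Odd j) (hj1 : 1 ≤ j) (hji : j ≤ i) :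
    ∃! n : ℕ, (i + 1) / 2 ≤ j * 2 ^ n ∧ j * 2 ^ n ≤ i :=
  stmt16_general i hi j hj1 hji
end

section
/- A graph G with n vertices and m edges, with n ≤ m + 1, has an α-labeling with critical number k if and only if G is bipartite and, after adding m+1−n isolated vertices, there is a bipartition of the resulting graph Ĝ with parts of sizes k+1 and m−k whose biadjacency matrix (for suitable orderings of the two parts) is graceful, meaning every diagonal of the (k+1)×(m−k) matrix contains at most one 1 (where the box-value of position (i,j), 1-indexed with the matrix having k+1 rows, is (k+1) + j − i, and a diagonal is the set of positions with a common box-value). -/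
/-!
Number the labels `0, …, m` as the cells of a `(k+1) + (m-k)` strip: label `i ≤ k` is row `i`
and label `k + 1 + j` is column `j`. A critical number `k` says that every edge joins a row to a
column, and an edge between row `i` and column `j` has label `k + 1 + j - i`, which depends only on
the diagonal `j - i`; so distinct edge labels means at most one entry per diagonal. The labels
that no vertex receives are taken by the `m + 1 - n` added isolated vertices.
-/

open Function Sum

section Cells

variable {k r : ℕ}

def cellLabel (x : Fin (k + 1) ⊕ Fin r) : ℕ := finSumFinEquiv x

@[simp]
theorem cellLabel_inl (i : Fin (k + 1)) : cellLabel (inl i : Fin (k + 1) ⊕ Fin r) = i := by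
  simp [cellLabel]

@[simp]
theorem cellLabel_inr (j : Fin r) : cellLabel (inr j : Fin (k + 1) ⊕ Fin r) = k + 1 + j := by
  simp [cellLabel]

theorem cellLabel_injective : Injective (cellLabel : Fin (k + 1) ⊕ Fin r → ℕ) :=
  Fin.val_injective.comp finSumFinEquiv.injective

theorem cellLabel_le {m : ℕ} (hk : k ≤ m) (x : Fin (k + 1) ⊕ Fin (m - k)) : cellLabel x ≤ m := by
  have := (finSumFinEquiv x).isLt
  simp only [cellLabel]
  omega

theorem exists_cellLabel_eq {V : Type*} {m : ℕ} (hk : k ≤ m) {f : V → ℕ} (hf : ∀ v, f v ≤ m) :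
    ∃ φ : V → Fin (k + 1) ⊕ Fin (m - k), ∀ v, cellLabel (φ v) = f v :=
  ⟨fun v => finSumFinEquiv.symm ⟨f v, by have := hf v; omega⟩, fun v => by simp [cellLabel]⟩

theorem critical_iff_isLeft_iff_isRight (x y : Fin (k + 1) ⊕ Fin r) :
    (min (cellLabel x) (cellLabel y) ≤ k ∧ k < max (cellLabel x) (cellLabel y)) ↔
      (x.isLeft ↔ y.isRight) := by
  rcases x with i | j <;> rcases y with i' | j' <;> simp <;> omega

theorem natAbs_cellLabel_inl_sub_inr (i : Fin (k + 1)) (j : Fin r) :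
    (((cellLabel (inl i : Fin (k + 1) ⊕ Fin r) : ℤ) -
        cellLabel (inr j : Fin (k + 1) ⊕ Fin r)).natAbs : ℤ) = k + 1 + ((j : ℤ) - i) := by
  simp only [cellLabel_inl, cellLabel_inr]
  omega

end Cells

theorem natAbs_sub_eq_of_sym2_eq {V : Type*} (f : V → ℕ) {a b u v : V} (h : s(a, b) = s(u, v)) :
    ((f a : ℤ) - f b).natAbs = ((f u : ℤ) - f v).natAbs := by
  rcases Sym2.eq_iff.mp h with ⟨rfl, rfl⟩ | ⟨rfl, rfl⟩
  · rfl
  · rw [← Int.natAbs_neg, neg_sub]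

theorem Function.Injective.exists_sumEquiv {V W : Type*} [Fintype V] [Fintype W] {φ : V → W}
    (hφ : Injective φ) {r : ℕ} (hr : Fintype.card W - Fintype.card V = r) :
    ∃ e : V ⊕ Fin r ≃ W, ∀ v, e (inl v) = φ v := by
  classical
  have hcompl : Fintype.card ↥(Set.range φ)ᶜ = r := by
    rw [Fintype.card_compl_set, Set.card_range_of_injective hφ, hr]
  exact ⟨((Equiv.ofInjective φ hφ).sumCongr (Fintype.equivFinOfCardEq hcompl).symm).trans
    (Equiv.Set.sumCompl _), fun v => rfl⟩

section Biadjacency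

variable {V : Type*} (G : SimpleGraph V) {k r : ℕ} (φ : V → Fin (k + 1) ⊕ Fin r)

def EdgesCrossParts : Prop :=
  ∀ u v, G.Adj u v → ((φ u).isLeft ↔ (φ v).isRight)

def Biadj (i : Fin (k + 1)) (j : Fin r) : Prop :=
  ∃ u v, G.Adj u v ∧ φ u = inl i ∧ φ v = inr j

/-- Rows and columns are 0-indexed, so the paper's box value `(k + 1) + j - i` of the cell `(i, j)`
differs from `j - i` by a constant, and diagonals are the level sets of `j - i`. -/
def IsGracefulBiadj : Prop :=
  ∀ p q : Fin (k + 1) × Fin r, Biadj G φ p.1 p.2 → Biadj G φ q.1 q.2 →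
    ((p.2 : ℤ) - (p.1 : ℤ) = (q.2 : ℤ) - (q.1 : ℤ)) → p = q

variable {G φ}

theorem EdgesCrossParts.exists_oriented (hφ : EdgesCrossParts G φ) {u v : V} (huv : G.Adj u v) :
    ∃ a b i j, s(a, b) = s(u, v) ∧ G.Adj a b ∧ φ a = inl i ∧ φ b = inr j := by
  rcases hu : φ u with i | j
  · obtain ⟨j, hv⟩ := isRight_iff.mp ((hφ u v huv).mp (by simp [hu]))
    exact ⟨u, v, i, j, rfl, huv, hu, hv⟩
  · have hv : (φ v).isLeft := by simpa [hu] using hφ u v huv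
    obtain ⟨i, hv⟩ := isLeft_iff.mp hv
    exact ⟨v, u, i, j, Sym2.eq_swap, huv.symm, hv, hu⟩

theorem isGracefulBiadj_of_gracefulLabeling {m : ℕ}
    (hf : GracefulLabeling G m fun v => cellLabel (φ v)) : IsGracefulBiadj G φ := by
  rintro ⟨i, j⟩ ⟨i', j'⟩ ⟨u, v, huv, hu, hv⟩ ⟨x, y, hxy, hx, hy⟩ (hdiag : (j : ℤ) - i = j' - i')
  dsimp only at hu hv hx hy
  have hlabel : ((cellLabel (φ u) : ℤ) - cellLabel (φ v)).natAbs =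
      ((cellLabel (φ x) : ℤ) - cellLabel (φ y)).natAbs := by
    have := natAbs_cellLabel_inl_sub_inr i j
    have := natAbs_cellLabel_inl_sub_inr i' j'
    rw [hu, hv, hx, hy]
    omega
  rcases Sym2.eq_iff.mp (hf.2.2 huv hxy hlabel) with ⟨rfl, rfl⟩ | ⟨rfl, -⟩
  · obtain rfl := inl_injective (hu.symm.trans hx)
    obtain rfl := inr_injective (hv.symm.trans hy)
    rfl
  · cases hu.symm.trans hy

theorem gracefulLabeling_of_isGracefulBiadj {m : ℕ} (hk : k ≤ m)
    {φ : V → Fin (k + 1) ⊕ Fin (m - k)} (hinj : Injective φ) (hcross : EdgesCrossParts G φ)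
    (hdiag : IsGracefulBiadj G φ) : GracefulLabeling G m fun v => cellLabel (φ v) := by
  refine ⟨cellLabel_injective.comp hinj, fun v => cellLabel_le hk _, ?_⟩
  intro u v x y huv hxy hlabel
  obtain ⟨a, b, i, j, hab, hadj, ha, hb⟩ := hcross.exists_oriented huv
  obtain ⟨c, d, i', j', hcd, hcdadj, hc, hd⟩ := hcross.exists_oriented hxy
  have hsame : ((cellLabel (φ a) : ℤ) - cellLabel (φ b)).natAbs =
      ((cellLabel (φ c) : ℤ) - cellLabel (φ d)).natAbs := by
    rw [natAbs_sub_eq_of_sym2_eq (fun v => cellLabel (φ v)) hab,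
      natAbs_sub_eq_of_sym2_eq (fun v => cellLabel (φ v)) hcd]
    exact hlabel
  rw [ha, hb, hc, hd] at hsame
  have hij := natAbs_cellLabel_inl_sub_inr (r := m - k) i j
  have hij' := natAbs_cellLabel_inl_sub_inr (r := m - k) i' j'
  have hsameDiag : (j : ℤ) - i = j' - i' := by omega
  obtain ⟨rfl, rfl⟩ := Prod.mk.inj <|
    hdiag (i, j) (i', j') ⟨a, b, hadj, ha, hb⟩ ⟨c, d, hcdadj, hc, hd⟩ hsameDiag
  rw [← hab, ← hcd, hinj (ha.trans hc.symm), hinj (hb.trans hd.symm)]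

theorem alphaLabeling_cellLabel_iff {m : ℕ} (hk : k ≤ m) {φ : V → Fin (k + 1) ⊕ Fin (m - k)}
    (hinj : Injective φ) :
    AlphaLabeling G m (fun v => cellLabel (φ v)) k ↔ EdgesCrossParts G φ ∧ IsGracefulBiadj G φ := by
  have hcrit : (∀ ⦃u v⦄, G.Adj u v → min (cellLabel (φ u)) (cellLabel (φ v)) ≤ k ∧
      k < max (cellLabel (φ u)) (cellLabel (φ v))) ↔ EdgesCrossParts G φ :=
    forall₂_congr fun u v => imp_congr_right fun _ => critical_iff_isLeft_iff_isRight _ _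
  constructor
  · rintro ⟨hgraceful, -, hcr⟩
    exact ⟨hcrit.1 hcr, isGracefulBiadj_of_gracefulLabeling hgraceful⟩
  · rintro ⟨hcross, hdiag⟩
    exact ⟨gracefulLabeling_of_isGracefulBiadj hk hinj hcross hdiag, hk, hcrit.2 hcross⟩

end Biadjacency

theorem stmt19_general {V : Type*} [Fintype V] (G : SimpleGraph V)
    (n m k : ℕ) (hn : Fintype.card V = n) (hk : k ≤ m) :
    (∃ f : V → ℕ, AlphaLabeling G m f k) ↔
    ∃ e : (V ⊕ Fin (m + 1 - n)) ≃ (Fin (k + 1) ⊕ Fin (m - k)),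
      (∀ u v : V, G.Adj u v →
        ((e (Sum.inl u)).isLeft ↔ (e (Sum.inl v)).isRight)) ∧
      (∀ p q : Fin (k + 1) × Fin (m - k),
        (∃ u v : V, G.Adj u v ∧ e (Sum.inl u) = Sum.inl p.1 ∧ e (Sum.inl v) = Sum.inr p.2) →
        (∃ u v : V, G.Adj u v ∧ e (Sum.inl u) = Sum.inl q.1 ∧ e (Sum.inl v) = Sum.inr q.2) →
        ((p.2 : ℤ) - (p.1 : ℤ) = (q.2 : ℤ) - (q.1 : ℤ)) → p = q) := by
  constructor
  · rintro ⟨f, hf⟩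
    obtain ⟨φ, hφ⟩ := exists_cellLabel_eq hk hf.1.2.1
    obtain rfl : (fun v => cellLabel (φ v)) = f := funext hφ
    have hinj : Injective φ := Injective.of_comp (f := cellLabel) hf.1.1
    obtain ⟨e, he⟩ := hinj.exists_sumEquiv (r := m + 1 - n) (by simp [hn]; omega)
    obtain rfl : (fun v => e (inl v)) = φ := funext he
    exact ⟨e, (alphaLabeling_cellLabel_iff hk hinj).1 hf⟩
  · rintro ⟨e, hcross, hdiag⟩
    exact ⟨_, (alphaLabeling_cellLabel_iff hk (e.injective.comp inl_injective)).2 ⟨hcross, hdiag⟩⟩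

theorem stmt19 {V : Type*} [Fintype V] (G : SimpleGraph V) [DecidableRel G.Adj]
    (n m k : ℕ) (hn : Fintype.card V = n) (hm : G.edgeFinset.card = m)
    (hnm : n ≤ m + 1) (hk : k ≤ m) :
    (∃ f : V → ℕ, AlphaLabeling G m f k) ↔
    ∃ e : (V ⊕ Fin (m + 1 - n)) ≃ (Fin (k + 1) ⊕ Fin (m - k)),
      (∀ u v : V, G.Adj u v →
        ((e (Sum.inl u)).isLeft ↔ (e (Sum.inl v)).isRight)) ∧
      (∀ p q : Fin (k + 1) × Fin (m - k),
        (∃ u v : V, G.Adj u v ∧ e (Sum.inl u) = Sum.inl p.1 ∧ e (Sum.inl v) = Sum.inr p.2) →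
        (∃ u v : V, G.Adj u v ∧ e (Sum.inl u) = Sum.inl q.1 ∧ e (Sum.inl v) = Sum.inr q.2) →
        ((p.2 : ℤ) - (p.1 : ℤ) = (q.2 : ℤ) - (q.1 : ℤ)) → p = q) :=
  stmt19_general G n m k hn hk
end
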